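/- Let d ≥ 3, λ ≥ 0, χ > 0, q ∈ (d, 2d), and let c_0 be such that ∇c_0 ∈ L^d(ℝ^d). Let (p_s)_{s>0} be a family of probability densities on ℝ^d satisfying sup_{s>0} s^{1-d/(2q)} ‖p_s‖_{L^q(ℝ^d)} ≤ C_q for some constant C_q > 0. Then there is a constant C > 0, depending only on d, q, χ, ‖∇c_0‖_{L^d} and C_q, such that for every u > 0 the drift b(u,x) := χ e^{-λu}(g_u * ∇c_0)(x) + χ ∫_0^u (K_{u-s} * p_s)(x) ds satisfies ‖b(u,·)‖_{L^∞(ℝ^d)} ≤ C u^{-1/2}. -/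

import Mathlib

open MeasureTheory ENNReal Set

noncomputable section

abbrev Euc (d : ℕ) := EuclideanSpace ℝ (Fin d)

/-- Gaussian heat kernel `g_t(x) = (2πt)^{-d/2} exp(-|x|²/(2t))` on ℝ^d. -/
def gauss (d : ℕ) (t : ℝ) (x : Euc d) : ℝ :=
  (2 * Real.pi * t) ^ (-(d : ℝ) / 2) * Real.exp (-‖x‖ ^ 2 / (2 * t))

/-- Vector interaction kernel `K_t(x) = e^{-λt} ∇g_t(x) = -(e^{-λt} g_t(x)/t) x`. -/
def Kvec (d : ℕ) (lam t : ℝ) (x : Euc d) : Euc d :=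
  (-(Real.exp (-lam * t) * gauss d t x / t)) • x

/-- The drift `b(u,x) = χ e^{-λu}(g_u * ∇c_0)(x) + χ ∫_0^u (K_{u-s} * p_s)(x) ds`. -/
def drift (d : ℕ) (lam χ : ℝ) (Dc0 : Euc d → Euc d) (p : ℝ → Euc d → ℝ)
    (u : ℝ) (x : Euc d) : Euc d :=
  (χ * Real.exp (-lam * u)) • (∫ y, gauss d u (x - y) • Dc0 y) +
    χ • ∫ s in Set.Ioo (0:ℝ) u, ∫ y, p s y • Kvec d lam (u - s) (x - y)


/-!
For fixed `u` and `x`, Hölder's inequality bounds the first term of the drift by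
`‖g_u‖_{d/(d-1)} ‖∇c₀‖_d`, which scales like `u^{-1/2}`, and the `s`-integrand of the second
by `‖p_s‖_q ‖K_{u-s}‖_{q'} ≲ s^{-a} (u-s)^{-b}` with `a = 1 - d/(2q)`, `b = 1/2 + d/(2q)`;
here `|K_t| ≤ 2^{d/2} t^{-1/2} g_{2t}`. Since `d < q`, both `a` and `b` lie in `[0, 1)`, and
`a + b = 3/2`, so the Beta-type integral `∫₀ᵘ s^{-a} (u-s)^{-b} ds` is of order `u^{-1/2}`.
-/

open Real

section Holder

variable {α E : Type*} [MeasurableSpace α] {μ : Measure α} [NormedAddCommGroup E]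
  [NormedSpace ℝ E]

theorem norm_integral_smul_le_eLpNorm_mul_eLpNorm {p q : ℝ≥0∞} [p.HolderConjugate q]
    {f : α → ℝ} {F : α → E} (hf : MemLp f p μ) (hF : MemLp F q μ) :
    ‖∫ a, f a • F a ∂μ‖ ≤ (eLpNorm f p μ).toReal * (eLpNorm F q μ).toReal := by
  rw [← ENNReal.toReal_mul, ← toReal_enorm]
  refine ENNReal.toReal_mono (ENNReal.mul_ne_top hf.eLpNorm_ne_top hF.eLpNorm_ne_top) ?_
  calc ‖∫ a, f a • F a ∂μ‖ₑ ≤ ∫⁻ a, ‖(f • F) a‖ₑ ∂μ := enorm_integral_le_lintegral_enorm _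
    _ = eLpNorm (f • F) 1 μ := eLpNorm_one_eq_lintegral_enorm.symm
    _ ≤ eLpNorm f p μ * eLpNorm F q μ := eLpNorm_smul_le_mul_eLpNorm hF.1 hf.1

end Holder

section Gaussian

variable {V : Type*} [NormedAddCommGroup V] [InnerProductSpace ℝ V] [FiniteDimensional ℝ V]
  [MeasurableSpace V] [BorelSpace V]

theorem integrable_exp_neg_mul_sq_norm {c : ℝ} (hc : 0 < c) :
    Integrable (fun v : V => rexp (-c * ‖v‖ ^ 2)) := by
  simpa [← Complex.ofReal_pow, ← Complex.ofReal_neg, ← Complex.ofReal_mul, Complex.norm_exp]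
    using (GaussianFourier.integrable_cexp_neg_mul_sq_norm_add (V := V)
      (b := (c : ℂ)) (by simpa using hc) 0 0).norm

theorem eLpNorm_exp_neg_mul_sq_norm {c r : ℝ} (hc : 0 < c) (hr : 0 < r) :
    eLpNorm (fun v : V => rexp (-c * ‖v‖ ^ 2)) (ENNReal.ofReal r) volume
      = ENNReal.ofReal ((π / (c * r)) ^ (Module.finrank ℝ V / (2 * r))) := by
  have hpow : ∀ v : V, ‖rexp (-c * ‖v‖ ^ 2)‖ ^ r = rexp (-(c * r) * ‖v‖ ^ 2) := fun v => by
    rw [Real.norm_of_nonneg (Real.exp_nonneg _), ← Real.exp_mul]; ring_nf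
  have hmem : MemLp (fun v : V => rexp (-c * ‖v‖ ^ 2)) (ENNReal.ofReal r) volume := by
    refine (memLp_norm_rpow_iff (by fun_prop) (by simpa using hr) ofReal_ne_top).mp ?_
    rw [ENNReal.div_self (by simpa using hr) ofReal_ne_top, memLp_one_iff_integrable,
      ENNReal.toReal_ofReal hr.le]
    simpa only [hpow] using integrable_exp_neg_mul_sq_norm (V := V) (mul_pos hc hr)
  rw [hmem.eLpNorm_eq_integral_rpow_norm (by simpa using hr) ofReal_ne_top,
    ENNReal.toReal_ofReal hr.le]
  simp only [hpow, GaussianFourier.integral_rexp_neg_mul_sq_norm (mul_pos hc hr)]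
  rw [← Real.rpow_mul (by positivity)]
  congr 2
  field_simp

end Gaussian

section HeatKernel

variable {d : ℕ}

/-- `‖g_1‖_{L^r}`; see `eLpNorm_gauss`. -/
def gaussNormConst (d : ℕ) (r : ℝ) : ℝ :=
  (2 * π) ^ (-(d : ℝ) / 2) * (2 * π / r) ^ ((d : ℝ) / (2 * r))

theorem gaussNormConst_nonneg (d : ℕ) {r : ℝ} (hr : 0 ≤ r) : 0 ≤ gaussNormConst d r := by
  unfold gaussNormConst; positivity

theorem gauss_eq_mul_exp (t : ℝ) (z : Euc d) :
    gauss d t z = (2 * π * t) ^ (-(d : ℝ) / 2) * rexp (-(1 / (2 * t)) * ‖z‖ ^ 2) := by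
  rw [gauss]; ring_nf

theorem gauss_pos {t : ℝ} (ht : 0 < t) (z : Euc d) : 0 < gauss d t z := by
  unfold gauss; positivity

theorem eLpNorm_gauss {t r : ℝ} (ht : 0 < t) (hr : 0 < r) :
    eLpNorm (gauss d t) (ENNReal.ofReal r) volume
      = ENNReal.ofReal (gaussNormConst d r * t ^ (-((d : ℝ) / 2 * (1 - 1 / r)))) := by
  have hgauss : gauss d t = (2 * π * t) ^ (-(d : ℝ) / 2) • fun z : Euc d =>
      rexp (-(1 / (2 * t)) * ‖z‖ ^ 2) := funext (gauss_eq_mul_exp t)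
  rw [hgauss, eLpNorm_const_smul, eLpNorm_exp_neg_mul_sq_norm (by positivity) hr,
    finrank_euclideanSpace_fin, Real.enorm_of_nonneg (by positivity), ← ENNReal.ofReal_mul
      (by positivity), gaussNormConst, show π / (1 / (2 * t) * r) = 2 * π / r * t by
      field_simp, Real.mul_rpow (by positivity) ht.le, Real.mul_rpow (by positivity) ht.le]
  congr 1
  rw [show -((d : ℝ) / 2 * (1 - 1 / r)) = -(d : ℝ) / 2 + (d : ℝ) / (2 * r) by field_simp; ring,
    Real.rpow_add ht]
  ring

theorem mul_exp_neg_sq_div_le_sqrt {t : ℝ} (ht : 0 < t) (ρ : ℝ) :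
    ρ * rexp (-(ρ ^ 2 / (4 * t))) ≤ √t := by
  obtain ⟨s, hs, rfl⟩ : ∃ s > 0, t = s ^ 2 := ⟨√t, Real.sqrt_pos.2 ht, (Real.sq_sqrt ht.le).symm⟩
  rw [Real.sqrt_sq hs.le]
  have hρ : ρ ≤ s * (ρ ^ 2 / (4 * s ^ 2) + 1) := by
    have hsq : s * (ρ ^ 2 / (4 * s ^ 2) + 1) - ρ = (ρ - 2 * s) ^ 2 / (4 * s) := by
      field_simp; ring
    rw [← sub_nonneg, hsq]
    positivity
  calc ρ * rexp (-(ρ ^ 2 / (4 * s ^ 2)))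
      ≤ s * rexp (ρ ^ 2 / (4 * s ^ 2)) * rexp (-(ρ ^ 2 / (4 * s ^ 2))) := by
        gcongr
        exact hρ.trans (by gcongr; exact Real.add_one_le_exp _)
    _ = s := by rw [mul_assoc, ← Real.exp_add, add_neg_cancel, Real.exp_zero, mul_one]

theorem gauss_eq_mul_gauss_two_mul {t : ℝ} (ht : 0 < t) (z : Euc d) :
    gauss d t z = 2 ^ ((d : ℝ) / 2) * gauss d (2 * t) z * rexp (-(‖z‖ ^ 2 / (4 * t))) := by
  unfold gauss
  rw [show 2 * π * (2 * t) = 2 * (2 * π * t) by ring,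
    Real.mul_rpow (x := 2) (y := 2 * π * t) (by norm_num) (by positivity),
    show (2 : ℝ) ^ (-(d : ℝ) / 2) = (2 ^ ((d : ℝ) / 2))⁻¹ by
      rw [← Real.rpow_neg (by norm_num)]; ring_nf]
  have h2 : (2 : ℝ) ^ ((d : ℝ) / 2) ≠ 0 := by positivity
  rw [show -‖z‖ ^ 2 / (2 * t) = -‖z‖ ^ 2 / (2 * (2 * t)) + -(‖z‖ ^ 2 / (4 * t)) by
    field_simp; ring, Real.exp_add]
  field_simp

theorem norm_Kvec_le {lam t : ℝ} (hlam : 0 ≤ lam) (ht : 0 < t) (z : Euc d) :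
    ‖Kvec d lam t z‖ ≤ 2 ^ ((d : ℝ) / 2) / √t * gauss d (2 * t) z := by
  have hdecay : rexp (-lam * t) ≤ 1 := Real.exp_le_one_iff.2 (by nlinarith)
  have hg := gauss_pos ht z
  calc ‖Kvec d lam t z‖ = rexp (-lam * t) * gauss d t z / t * ‖z‖ := by
        rw [Kvec, norm_smul, Real.norm_eq_abs, abs_neg, abs_of_nonneg (by positivity)]
    _ ≤ gauss d t z / t * ‖z‖ := by gcongr; exact mul_le_of_le_one_left hg.le hdecay
    _ = 2 ^ ((d : ℝ) / 2) * gauss d (2 * t) z / t * (‖z‖ * rexp (-(‖z‖ ^ 2 / (4 * t)))) := by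
        rw [gauss_eq_mul_gauss_two_mul ht]; ring
    _ ≤ 2 ^ ((d : ℝ) / 2) * gauss d (2 * t) z / t * √t := by
        have := gauss_pos (by positivity : 0 < 2 * t) z
        gcongr
        exact mul_exp_neg_sq_div_le_sqrt ht _
    _ = 2 ^ ((d : ℝ) / 2) * gauss d (2 * t) z * (√t / t) := by ring
    _ = 2 ^ ((d : ℝ) / 2) / √t * gauss d (2 * t) z := by rw [Real.sqrt_div_self']; ring

theorem eLpNorm_Kvec_le {lam t r : ℝ} (hlam : 0 ≤ lam) (ht : 0 < t) (hr : 0 < r) :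
    eLpNorm (Kvec d lam t) (ENNReal.ofReal r) volume ≤ ENNReal.ofReal (2 ^ ((d : ℝ) / (2 * r))
      * gaussNormConst d r * t ^ (-(1 / 2 + (d : ℝ) / 2 * (1 - 1 / r)))) := by
  calc eLpNorm (Kvec d lam t) (ENNReal.ofReal r) volume
      ≤ eLpNorm ((2 ^ ((d : ℝ) / 2) / √t) • gauss d (2 * t)) (ENNReal.ofReal r) volume :=
        eLpNorm_mono_real (norm_Kvec_le hlam ht)
    _ = _ := by
      rw [eLpNorm_const_smul, eLpNorm_gauss (by positivity) hr, Real.enorm_of_nonneg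
        (by positivity), ← ENNReal.ofReal_mul (by positivity)]
      congr 1
      rw [Real.sqrt_eq_rpow, Real.mul_rpow (by norm_num) ht.le,
        show -(1 / 2 + (d : ℝ) / 2 * (1 - 1 / r)) = -((d : ℝ) / 2 * (1 - 1 / r)) - 1 / 2 by ring,
        Real.rpow_sub ht,
        show (d : ℝ) / (2 * r) = d / 2 + -((d : ℝ) / 2 * (1 - 1 / r)) by field_simp; ring,
        Real.rpow_add two_pos]
      ring

end HeatKernel

section TimeIntegral

variable {a b u : ℝ}

theorem rpow_neg_mul_rpow_neg_le (ha : 0 ≤ a) (hb : 0 ≤ b) {s : ℝ} (hs : s ∈ Ioo 0 u) :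
    s ^ (-a) * (u - s) ^ (-b) ≤ (u / 2) ^ (-b) * s ^ (-a) + (u / 2) ^ (-a) * (u - s) ^ (-b) := by
  obtain ⟨hs0, hsu⟩ := hs
  have hus : 0 < u - s := by linarith
  rcases le_total s (u / 2) with hle | hle
  · have : (u - s) ^ (-b) ≤ (u / 2) ^ (-b) :=
      Real.rpow_le_rpow_of_nonpos (by linarith) (by linarith) (by linarith)
    nlinarith [Real.rpow_pos_of_pos hs0 (-a), Real.rpow_pos_of_pos hus (-b),
      Real.rpow_pos_of_pos (by linarith : 0 < u / 2) (-a)]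
  · have : s ^ (-a) ≤ (u / 2) ^ (-a) :=
      Real.rpow_le_rpow_of_nonpos (by linarith) hle (by linarith)
    nlinarith [Real.rpow_pos_of_pos hs0 (-a), Real.rpow_pos_of_pos hus (-b),
      Real.rpow_pos_of_pos (by linarith : 0 < u / 2) (-b)]

theorem integrableOn_Ioo_rpow_neg (ha : a < 1) :
    IntegrableOn (fun s : ℝ => s ^ (-a)) (Ioo 0 u) := by
  rcases le_total u 0 with hu | hu
  · simp [Ioo_eq_empty_of_le hu]
  · exact ((intervalIntegrable_iff_integrableOn_Ioc_of_le hu).1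
      (intervalIntegral.intervalIntegrable_rpow' (by linarith))).mono_set Ioo_subset_Ioc_self

theorem integral_Ioo_rpow_neg (ha : a < 1) (hu : 0 ≤ u) :
    ∫ s in Ioo 0 u, s ^ (-a) = u ^ (1 - a) / (1 - a) := by
  rw [← integral_Ioc_eq_integral_Ioo, ← intervalIntegral.integral_of_le hu,
    integral_rpow (Or.inl (by linarith)), Real.zero_rpow (by linarith), sub_zero, neg_add_eq_sub]

theorem integrableOn_Ioo_sub_rpow_neg (hb : b < 1) :
    IntegrableOn (fun s : ℝ => (u - s) ^ (-b)) (Ioo 0 u) := by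
  rcases le_total u 0 with hu | hu
  · simp [Ioo_eq_empty_of_le hu]
  · have h := ((intervalIntegral.intervalIntegrable_rpow' (a := 0) (b := u)
      (by linarith : -1 < -b)).comp_sub_left u).symm
    rw [sub_zero, sub_self, intervalIntegrable_iff_integrableOn_Ioc_of_le hu] at h
    exact h.mono_set Ioo_subset_Ioc_self

theorem integral_Ioo_sub_rpow_neg (hb : b < 1) (hu : 0 ≤ u) :
    ∫ s in Ioo 0 u, (u - s) ^ (-b) = u ^ (1 - b) / (1 - b) := by
  rw [← integral_Ioc_eq_integral_Ioo, ← intervalIntegral.integral_of_le hu,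
    intervalIntegral.integral_comp_sub_left (fun s : ℝ => s ^ (-b)), sub_self, sub_zero,
    integral_rpow (Or.inl (by linarith)), Real.zero_rpow (by linarith), sub_zero, neg_add_eq_sub]

theorem norm_setIntegral_Ioo_le_of_norm_le_rpow_mul_rpow {E : Type*} [NormedAddCommGroup E]
    [NormedSpace ℝ E] (ha : 0 ≤ a) (ha1 : a < 1) (hb : 0 ≤ b) (hb1 : b < 1) (hu : 0 < u)
    {C : ℝ} (hC : 0 ≤ C) {Φ : ℝ → E}
    (hΦ : ∀ s ∈ Ioo 0 u, ‖Φ s‖ ≤ C * (s ^ (-a) * (u - s) ^ (-b))) :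
    ‖∫ s in Ioo 0 u, Φ s‖ ≤ C * (2 ^ b / (1 - a) + 2 ^ a / (1 - b)) * u ^ (1 - a - b) := by
  have hmaj : IntegrableOn
      (fun s => C * ((u / 2) ^ (-b) * s ^ (-a) + (u / 2) ^ (-a) * (u - s) ^ (-b))) (Ioo 0 u) :=
    (((integrableOn_Ioo_rpow_neg ha1).const_mul _).add
      ((integrableOn_Ioo_sub_rpow_neg hb1).const_mul _)).const_mul C
  refine (norm_integral_le_of_norm_le hmaj ((ae_restrict_iff' measurableSet_Ioo).2
    (ae_of_all _ fun s hs => (hΦ s hs).trans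
      (mul_le_mul_of_nonneg_left (rpow_neg_mul_rpow_neg_le ha hb hs) hC)))).trans_eq ?_
  rw [integral_const_mul, integral_add ((integrableOn_Ioo_rpow_neg ha1).const_mul _)
    ((integrableOn_Ioo_sub_rpow_neg hb1).const_mul _), integral_const_mul, integral_const_mul,
    integral_Ioo_rpow_neg ha1 hu.le, integral_Ioo_sub_rpow_neg hb1 hu.le]
  have hsplit : ∀ e f : ℝ, (u / 2) ^ (-e) * (u ^ (1 - f) / (1 - f))
      = 2 ^ e / (1 - f) * u ^ (1 - f - e) := fun e f => by
    rw [Real.div_rpow hu.le two_pos.le, Real.rpow_neg two_pos.le, sub_eq_add_neg (1 - f) e,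
      Real.rpow_add hu]
    field_simp
  rw [mul_assoc, hsplit, hsplit, sub_right_comm 1 b a]
  ring

end TimeIntegral

section Convolution

variable {d : ℕ} {E : Type*} [NormedAddCommGroup E]

theorem continuous_gauss (d : ℕ) (t : ℝ) : Continuous (gauss d t) := by
  unfold gauss; fun_prop

theorem continuous_Kvec (d : ℕ) (lam t : ℝ) : Continuous (Kvec d lam t) := by
  unfold Kvec gauss; fun_prop

theorem memLp_gauss {t r : ℝ} (ht : 0 < t) (hr : 0 < r) :
    MemLp (gauss d t) (ENNReal.ofReal r) volume :=
  ⟨(continuous_gauss d t).aestronglyMeasurable, by rw [eLpNorm_gauss ht hr]; exact ofReal_lt_top⟩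

theorem memLp_Kvec {lam t r : ℝ} (hlam : 0 ≤ lam) (ht : 0 < t) (hr : 0 < r) :
    MemLp (Kvec d lam t) (ENNReal.ofReal r) volume :=
  ⟨(continuous_Kvec d lam t).aestronglyMeasurable,
    (eLpNorm_Kvec_le hlam ht hr).trans_lt ofReal_lt_top⟩

theorem memLp_comp_sub_left {G : Euc d → E} {p : ℝ≥0∞} (hG : MemLp G p volume) (x : Euc d) :
    MemLp (fun y => G (x - y)) p volume :=
  hG.comp_measurePreserving (Measure.measurePreserving_sub_left volume x)

theorem eLpNorm_comp_sub_left {G : Euc d → E} {p : ℝ≥0∞} (hG : AEStronglyMeasurable G volume)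
    (x : Euc d) : eLpNorm (fun y => G (x - y)) p volume = eLpNorm G p volume :=
  eLpNorm_comp_measurePreserving hG (Measure.measurePreserving_sub_left volume x)

theorem norm_integral_gauss_smul_le [NormedSpace ℝ E] (hd : 1 < d) {t : ℝ} (ht : 0 < t)
    {F : Euc d → E} (hF : MemLp F (ENNReal.ofReal d) volume) (x : Euc d) :
    ‖∫ y, gauss d t (x - y) • F y‖
      ≤ gaussNormConst d (Real.conjExponent d) * t ^ (-(1 / 2 : ℝ))
        * (eLpNorm F (ENNReal.ofReal d) volume).toReal := by
  have hconj := (Real.HolderConjugate.conjExponent (p := (d : ℝ)) (by exact_mod_cast hd)).symm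
  have := hconj.ennrealOfReal
  refine (norm_integral_smul_le_eLpNorm_mul_eLpNorm
    (memLp_comp_sub_left (memLp_gauss ht hconj.pos) x) hF).trans_eq ?_
  rw [eLpNorm_comp_sub_left (continuous_gauss d t).aestronglyMeasurable,
    eLpNorm_gauss ht hconj.pos, ENNReal.toReal_ofReal
      (by have := gaussNormConst_nonneg d hconj.nonneg; positivity), one_div, hconj.one_sub_inv,
    show (d : ℝ) / 2 * (d : ℝ)⁻¹ = 1 / 2 by field_simp]

theorem norm_integral_smul_Kvec_le {lam t q : ℝ} (hlam : 0 ≤ lam) (ht : 0 < t) (hq : 1 < q)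
    {f : Euc d → ℝ} (hf : MemLp f (ENNReal.ofReal q) volume) (x : Euc d) :
    ‖∫ y, f y • Kvec d lam t (x - y)‖
      ≤ (eLpNorm f (ENNReal.ofReal q) volume).toReal
        * (2 ^ ((d : ℝ) / (2 * Real.conjExponent q)) * gaussNormConst d (Real.conjExponent q)
          * t ^ (-(1 / 2 + (d : ℝ) / (2 * q)))) := by
  have hconj := Real.HolderConjugate.conjExponent hq
  have := hconj.ennrealOfReal
  refine (norm_integral_smul_le_eLpNorm_mul_eLpNorm hf
    (memLp_comp_sub_left (memLp_Kvec hlam ht hconj.symm.pos) x)).trans ?_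
  rw [eLpNorm_comp_sub_left (continuous_Kvec d lam t).aestronglyMeasurable]
  gcongr
  refine ENNReal.toReal_le_of_le_ofReal (by
    have := gaussNormConst_nonneg d hconj.symm.nonneg; positivity) ?_
  convert eLpNorm_Kvec_le hlam ht hconj.symm.pos using 4
  rw [one_div (Real.conjExponent q), hconj.symm.one_sub_inv]
  ring

end Convolution

section Drift

variable {d : ℕ}

theorem exists_norm_interaction_term_le {lam q Cq : ℝ} (hd : 0 < d) (hlam : 0 ≤ lam)
    (hq : (d : ℝ) < q) (hCq : 0 ≤ Cq) {p : ℝ → Euc d → ℝ}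
    (hmeas : ∀ s : ℝ, 0 < s → AEStronglyMeasurable (p s) volume)
    (hbound : ∀ s : ℝ, 0 < s →
      eLpNorm (p s) (ENNReal.ofReal q) volume
        ≤ ENNReal.ofReal (Cq / s ^ (1 - (d : ℝ) / (2 * q)))) :
    ∃ C : ℝ, ∀ u : ℝ, 0 < u → ∀ x : Euc d,
      ‖∫ s in Ioo 0 u, ∫ y, p s y • Kvec d lam (u - s) (x - y)‖ ≤ C * u ^ (-(1 / 2 : ℝ)) := by
  have hd' : (1 : ℝ) ≤ d := by exact_mod_cast hd
  have hq1 : 1 < q := by linarith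
  have hdq : 0 < (d : ℝ) / (2 * q) := by positivity
  have hdq' : (d : ℝ) / (2 * q) < 1 / 2 := by rw [div_lt_iff₀ (by positivity)]; linarith
  set a := 1 - (d : ℝ) / (2 * q) with ha
  set b := 1 / 2 + (d : ℝ) / (2 * q) with hb
  have ha0 : 0 ≤ a := by linarith
  have ha1 : a < 1 := by linarith
  have hb0 : 0 ≤ b := by linarith
  have hb1 : b < 1 := by linarith
  have hconj := Real.HolderConjugate.conjExponent hq1
  set B := 2 ^ ((d : ℝ) / (2 * Real.conjExponent q)) * gaussNormConst d (Real.conjExponent q)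
  have hB : 0 ≤ B := by have := gaussNormConst_nonneg d hconj.symm.nonneg; positivity
  refine ⟨Cq * B * (2 ^ b / (1 - a) + 2 ^ a / (1 - b)), fun u hu x => ?_⟩
  have hslice : ∀ s ∈ Ioo 0 u, ‖∫ y, p s y • Kvec d lam (u - s) (x - y)‖
      ≤ Cq * B * (s ^ (-a) * (u - s) ^ (-b)) := by
    rintro s ⟨hs, hsu⟩
    have hps : (eLpNorm (p s) (ENNReal.ofReal q) volume).toReal ≤ Cq * s ^ (-a) := by
      rw [Real.rpow_neg hs.le, ← div_eq_mul_inv]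
      exact ENNReal.toReal_le_of_le_ofReal (by positivity) (hbound s hs)
    calc ‖∫ y, p s y • Kvec d lam (u - s) (x - y)‖
        ≤ (eLpNorm (p s) (ENNReal.ofReal q) volume).toReal * (B * (u - s) ^ (-b)) :=
          norm_integral_smul_Kvec_le hlam (by linarith) hq1
            ⟨hmeas s hs, (hbound s hs).trans_lt ofReal_lt_top⟩ x
      _ ≤ Cq * s ^ (-a) * (B * (u - s) ^ (-b)) := by gcongr
      _ = Cq * B * (s ^ (-a) * (u - s) ^ (-b)) := by ring
  refine (norm_setIntegral_Ioo_le_of_norm_le_rpow_mul_rpow ha0 ha1 hb0 hb1 hu (by positivity)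
    hslice).trans_eq ?_
  congr 2
  ring

theorem norm_drift_le {lam χ u : ℝ} (hlam : 0 ≤ lam) (hu : 0 ≤ u) (Dc0 : Euc d → Euc d)
    (p : ℝ → Euc d → ℝ) (x : Euc d) :
    ‖drift d lam χ Dc0 p u x‖ ≤ |χ| * (‖∫ y, gauss d u (x - y) • Dc0 y‖
      + ‖∫ s in Ioo 0 u, ∫ y, p s y • Kvec d lam (u - s) (x - y)‖) := by
  have hdecay : rexp (-lam * u) ≤ 1 := Real.exp_le_one_iff.2 (by nlinarith)
  calc ‖drift d lam χ Dc0 p u x‖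
      ≤ |χ| * rexp (-lam * u) * ‖∫ y, gauss d u (x - y) • Dc0 y‖
        + |χ| * ‖∫ s in Ioo 0 u, ∫ y, p s y • Kvec d lam (u - s) (x - y)‖ := by
        refine (norm_add_le _ _).trans_eq ?_
        rw [norm_smul, norm_smul, Real.norm_eq_abs, Real.norm_eq_abs, abs_mul,
          abs_of_pos (Real.exp_pos _)]
    _ ≤ _ := by
        rw [mul_add]
        gcongr
        exact mul_le_of_le_one_right (abs_nonneg χ) hdecay

end Drift

theorem drift_sup_norm_estimate_general (d : ℕ) (hd : 3 ≤ d) (lam χ : ℝ) (hlam : 0 ≤ lam)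
    (q : ℝ) (hq1 : (d : ℝ) < q)
    (Dc0 : Euc d → Euc d) (hDc0 : MemLp Dc0 (ENNReal.ofReal d) volume)
    (p : ℝ → Euc d → ℝ)
    (hprob : ∀ s : ℝ, 0 < s →
      (∀ x, 0 ≤ p s x) ∧ Integrable (p s) volume ∧ (∫ x, p s x) = 1)
    (Cq : ℝ) (hCq : 0 < Cq)
    (hbound : ∀ s : ℝ, 0 < s →
      eLpNorm (p s) (ENNReal.ofReal q) volume
        ≤ ENNReal.ofReal (Cq / s ^ (1 - (d : ℝ) / (2 * q)))) :
    ∃ C : ℝ, 0 < C ∧ ∀ u : ℝ, 0 < u →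
      eLpNorm (drift d lam χ Dc0 p u) ⊤ volume
        ≤ ENNReal.ofReal (C * u ^ (-(1 / 2 : ℝ))) := by
  obtain ⟨M, hinteraction⟩ := exists_norm_interaction_term_le (by omega) hlam hq1 hCq.le
    (fun s hs => (hprob s hs).2.1.aestronglyMeasurable) hbound
  set A := gaussNormConst d (Real.conjExponent d) * (eLpNorm Dc0 (ENNReal.ofReal d) volume).toReal
  refine ⟨max (|χ| * (A + M)) 1, lt_max_of_lt_right one_pos, fun u hu => ?_⟩
  rw [eLpNorm_exponent_top]
  refine eLpNormEssSup_le_of_ae_bound (ae_of_all _ fun x => ?_)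
  have hheat : ‖∫ y, gauss d u (x - y) • Dc0 y‖ ≤ A * u ^ (-(1 / 2 : ℝ)) :=
    (norm_integral_gauss_smul_le (by omega) hu hDc0 x).trans_eq (by ring)
  calc ‖drift d lam χ Dc0 p u x‖
      ≤ |χ| * (A * u ^ (-(1 / 2 : ℝ)) + M * u ^ (-(1 / 2 : ℝ))) :=
        (norm_drift_le hlam hu.le Dc0 p x).trans (by gcongr; exact hinteraction u hu x)
    _ = |χ| * (A + M) * u ^ (-(1 / 2 : ℝ)) := by ring
    _ ≤ max (|χ| * (A + M)) 1 * u ^ (-(1 / 2 : ℝ)) := by gcongr; exact le_max_left _ _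

/-- Let `d ≥ 3`, `λ ≥ 0`, `χ > 0`, `q ∈ (d,2d)`, `∇c_0 ∈ L^d(ℝ^d)`, and let `(p_s)_{s>0}` be
probability densities with `s^{1-d/(2q)} ‖p_s‖_{L^q} ≤ C_q`. Then there is `C > 0` such that
for all `u > 0`, `‖b(u,·)‖_{L^∞} ≤ C u^{-1/2}`. -/
theorem drift_sup_norm_estimate (d : ℕ) (hd : 3 ≤ d) (lam χ : ℝ) (hlam : 0 ≤ lam) (hχ : 0 < χ)
    (q : ℝ) (hq1 : (d : ℝ) < q) (hq2 : q < 2 * d)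
    (Dc0 : Euc d → Euc d) (hDc0 : MemLp Dc0 (ENNReal.ofReal d) volume)
    (p : ℝ → Euc d → ℝ)
    (hprob : ∀ s : ℝ, 0 < s →
      (∀ x, 0 ≤ p s x) ∧ Integrable (p s) volume ∧ (∫ x, p s x) = 1)
    (Cq : ℝ) (hCq : 0 < Cq)
    (hbound : ∀ s : ℝ, 0 < s →
      eLpNorm (p s) (ENNReal.ofReal q) volume
        ≤ ENNReal.ofReal (Cq / s ^ (1 - (d : ℝ) / (2 * q)))) :
    ∃ C : ℝ, 0 < C ∧ ∀ u : ℝ, 0 < u →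
      eLpNorm (drift d lam χ Dc0 p u) ⊤ volume
        ≤ ENNReal.ofReal (C * u ^ (-(1 / 2 : ℝ))) :=
  drift_sup_norm_estimate_general d hd lam χ hlam q hq1 Dc0 hDc0 p hprob Cq hCq hbound
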